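/- Let α, β, γ ∈ (0, π) with α + β + γ = π. Then for all (s, t, r) ∈ ℝ³ the quadratic form Q(s,t,r) = cot α·(t−r)² + cot β·(r−s)² + cot γ·(s−t)² satisfies Q(s,t,r) ≥ 0, and Q(s,t,r) = 0 if and only if s = t = r. In other words, Q is positive semidefinite with one-dimensional kernel spanned by (1,1,1). -/

import Mathlib

/-!
With `a, b, c` the three cotangents, substitute `x = t - r`, `y = r - s` (so `s - t = -(x + y)`)
and complete the square:
`(a + c) Q = ((a + c) x + c y)² + (ab + bc + ca) y²`.
In a triangle `a + c = sin β / (sin α sin γ) > 0` and `ab + bc + ca = 1`,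
so `Q ≥ 0`, and `Q = 0` forces `y = 0` and then `x = 0`.
-/

open Real

theorem three_weight_form_mul_eq (a b c s t r : ℝ) :
    (a + c) * (a * (t - r) ^ 2 + b * (r - s) ^ 2 + c * (s - t) ^ 2) =
      ((a + c) * (t - r) + c * (r - s)) ^ 2 + (a * b + b * c + c * a) * (r - s) ^ 2 := by
  ring

theorem three_weight_form_nonneg_and_eq_zero_iff {a b c : ℝ} (hac : 0 < a + c)
    (hD : 0 < a * b + b * c + c * a) (s t r : ℝ) :
    0 ≤ a * (t - r) ^ 2 + b * (r - s) ^ 2 + c * (s - t) ^ 2 ∧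
      (a * (t - r) ^ 2 + b * (r - s) ^ 2 + c * (s - t) ^ 2 = 0 ↔ s = t ∧ t = r) := by
  have hsq := three_weight_form_mul_eq a b c s t r
  refine ⟨nonneg_of_mul_nonneg_right (hsq ▸ by positivity) hac, fun hQ => ?_, ?_⟩
  · rw [hQ, mul_zero, eq_comm] at hsq
    obtain ⟨hX, hY⟩ := (add_eq_zero_iff_of_nonneg (sq_nonneg _) (by positivity)).mp hsq
    have hrs : r - s = 0 := pow_eq_zero_iff two_ne_zero |>.mp
      ((mul_eq_zero.mp hY).resolve_left hD.ne')
    have htr : t - r = 0 := by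
      rw [hrs, mul_zero, add_zero, sq_eq_zero_iff, mul_eq_zero] at hX
      exact hX.resolve_left hac.ne'
    constructor <;> linarith
  · rintro ⟨rfl, rfl⟩
    simp

theorem cot_add_cot {α β : ℝ} (hα : sin α ≠ 0) (hβ : sin β ≠ 0) :
    cot α + cot β = sin (α + β) / (sin α * sin β) := by
  rw [cot_eq_cos_div_sin, cot_eq_cos_div_sin, sin_add]
  field_simp
  ring

theorem cot_add_cot_pos {α β : ℝ} (hα : α ∈ Set.Ioo 0 π) (hβ : β ∈ Set.Ioo 0 π)
    (hαβ : α + β < π) : 0 < cot α + cot β := by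
  have hsα := sin_pos_of_pos_of_lt_pi hα.1 hα.2
  have hsβ := sin_pos_of_pos_of_lt_pi hβ.1 hβ.2
  rw [cot_add_cot hsα.ne' hsβ.ne']
  exact div_pos (sin_pos_of_pos_of_lt_pi (by linarith [hα.1, hβ.1]) hαβ) (mul_pos hsα hsβ)

theorem cot_mul_cot_add_cot_mul_cot_add_cot_mul_cot_eq_one {α β γ : ℝ} (hα : sin α ≠ 0)
    (hβ : sin β ≠ 0) (hγ : sin γ ≠ 0) (hsum : α + β + γ = π) :
    cot α * cot β + cot β * cot γ + cot γ * cot α = 1 := by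
  have hγ' : γ = π - (α + β) := by linarith
  have hsinγ : sin γ = sin α * cos β + cos α * sin β := by rw [hγ', sin_pi_sub, sin_add]
  have hcosγ : cos γ = sin α * sin β - cos α * cos β := by
    rw [hγ', cos_pi_sub, cos_add]; ring
  simp only [cot_eq_cos_div_sin, hcosγ]
  rw [hsinγ] at hγ ⊢
  field_simp
  ring

/-- For angles `α, β, γ ∈ (0,π)` with `α + β + γ = π`, the quadratic form
`Q(s,t,r) = cot α·(t−r)² + cot β·(r−s)² + cot γ·(s−t)²` is positive
semidefinite, and it vanishes exactly on the constants `s = t = r`. -/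
theorem cot_form_posSemidef (α β γ : ℝ)
    (hα : α ∈ Set.Ioo 0 π) (hβ : β ∈ Set.Ioo 0 π) (hγ : γ ∈ Set.Ioo 0 π)
    (hsum : α + β + γ = π) :
    ∀ s t r : ℝ,
      0 ≤ Real.cot α * (t - r)^2 + Real.cot β * (r - s)^2 + Real.cot γ * (s - t)^2 ∧
      (Real.cot α * (t - r)^2 + Real.cot β * (r - s)^2 + Real.cot γ * (s - t)^2 = 0 ↔
        s = t ∧ t = r) := by
  have hsin {θ : ℝ} (hθ : θ ∈ Set.Ioo 0 π) : sin θ ≠ 0 :=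
    (sin_pos_of_pos_of_lt_pi hθ.1 hθ.2).ne'
  refine three_weight_form_nonneg_and_eq_zero_iff
    (cot_add_cot_pos hα hγ (by linarith [hβ.1])) ?_
  rw [cot_mul_cot_add_cot_mul_cot_add_cot_mul_cot_eq_one (hsin hα) (hsin hβ) (hsin hγ) hsum]
  exact one_pos
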